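/- arXiv:1704.00997 — 2 statements merged into one kernel-verified Lean document; each statement's English description precedes it below -/
import Mathlib

section
/- Let b ∈ I. Then (b) is a reduction of I if and only if b/a is an invertible element of S. When this is the case, S = R[I/b] and r_Q(I) = r_{(b)}(I). -/
open IsLocalRing Polynomial

set_option maxHeartbeats 1000000
set_option synthInstance.maxHeartbeats 400000

noncomputable section

/-- The (ℕ-valued) length `ℓ_R(M)` of an `R`-module `M`, defined as the Krull dimension of
its lattice of submodules (with junk value `0` if the length is infinite). -/
noncomputable def flen (R M : Type*) [Ring R] [AddCommGroup M] [Module R M] : ℕ :=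
  (WithBot.unbotD 0 (Order.krullDim (Submodule R M))).toNat

/-- The quotient module `Y/X` for submodules `X ⊆ Y` of a module. -/
noncomputable abbrev quotMod {R M : Type*} [CommRing R] [AddCommGroup M] [Module R M]
    (Y X : Submodule R M) :=
  ↥Y ⧸ X.comap Y.subtype

/-- `colen Y X = ℓ_R(Y/X)`. -/
noncomputable def colen {R M : Type*} [CommRing R] [AddCommGroup M] [Module R M]
    (Y X : Submodule R M) : ℕ :=
  flen R (quotMod Y X)

/-- The fractional ideal `K = I/a = {x/a : x ∈ I}` inside the total quotient ring of `R`. -/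
noncomputable def Kfrac (R : Type*) [CommRing R] (I : Ideal R) (a : R) :
    Submodule R (FractionRing R) :=
  Submodule.span R {z : FractionRing R |
    ∃ x ∈ I, z * algebraMap R (FractionRing R) a = algebraMap R (FractionRing R) x}

/-- The ring `S = R[K]`. -/
noncomputable def Sring (R : Type*) [CommRing R] (I : Ideal R) (a : R) :
    Subalgebra R (FractionRing R) :=
  Algebra.adjoin R (Kfrac R I a : Set (FractionRing R))

/-- `S = R[K]` as an `R`-submodule of the total quotient ring. -/
noncomputable def Smod (R : Type*) [CommRing R] (I : Ideal R) (a : R) :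
    Submodule R (FractionRing R) :=
  Subalgebra.toSubmodule (Sring R I a)

/-- The conductor `𝔠 = R : S`, as a submodule of the total quotient ring. -/
noncomputable def condS (R : Type*) [CommRing R] (I : Ideal R) (a : R) :
    Submodule R (FractionRing R) :=
  (1 : Submodule R (FractionRing R)) / Smod R I a

/-- The conductor `𝔠 = R : S`, as an ideal of `R`. -/
noncomputable def condIdeal (R : Type*) [CommRing R] (I : Ideal R) (a : R) : Ideal R :=
  (condS R I a).comap (Algebra.linearMap R (FractionRing R))

/-- The image of the maximal ideal `m` in the total quotient ring. -/
noncomputable def mSub (R : Type*) [CommRing R] [IsLocalRing R] :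
    Submodule R (FractionRing R) :=
  Submodule.map (Algebra.linearMap R (FractionRing R)) (maximalIdeal R)

/-- A fractional ideal `K` is a canonical module of `R` (the Herzog–Kunz duality
characterization): `K : (K : J) = J` for every finitely generated regular fractional ideal. -/
def IsCanonicalSub (R : Type*) [CommRing R] (K : Submodule R (FractionRing R)) : Prop :=
  ∀ J : Submodule R (FractionRing R), J.FG → (∃ z ∈ J, IsUnit z) → K / (K / J) = J

/-- The setting: `I ≠ R` is a canonical ideal of `R` (i.e. `I ≅ K_R`, expressed via the
Herzog–Kunz duality property of `K = I/a`), containing the parameter ideal `Q = (a)`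
(`a` a non-zerodivisor) as a reduction. -/
structure CanSetting (R : Type*) [CommRing R] (I : Ideal R) (a : R) : Prop where
  ne_top : I ≠ ⊤
  mem : a ∈ I
  nzd : a ∈ nonZeroDivisors R
  red : ∃ n : ℕ, I ^ (n + 1) = Ideal.span {a} * I ^ n
  canonical : IsCanonicalSub R (Kfrac R I a)

/-- `μ_R(M)`: the minimal number of generators `ℓ_R(M/mM)`. -/
noncomputable def muR (R : Type*) [CommRing R] [IsLocalRing R]
    (M : Type*) [AddCommGroup M] [Module R M] : ℕ :=
  flen R (M ⧸ (maximalIdeal R • ⊤ : Submodule R M))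

/-- The Sally module `S_Q(I)` of `I` with respect to `Q = (a)` has rank `r`, i.e. the
eventually constant value of `ℓ_R(I^{n+1}/Q^n I) = ℓ_R([S_Q(I)]_n)` equals `r`. -/
def SallyRankIs (R : Type*) [CommRing R] (I : Ideal R) (a : R) (r : ℕ) : Prop :=
  ∃ N : ℕ, ∀ n ≥ N, colen (I ^ (n + 1)) (Ideal.span {a} ^ n * I) = r

/-- `e0` and `e1` are the Hilbert coefficients of the `m`-primary ideal `I`:
`ℓ_R(R/I^{n+1}) = e0·(n+1) - e1` for all large `n`. -/
def IsHilbCoeffs (R : Type*) [CommRing R] (I : Ideal R) (e0 e1 : ℤ) : Prop :=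
  ∃ N : ℕ, ∀ n ≥ N, (flen R (R ⧸ I ^ (n + 1)) : ℤ) = e0 * (n + 1) - e1

/-- The multiplicity `e(A) = e_m^0(A)` of a one-dimensional local ring equals `e`. -/
def RingMultIs (A : Type*) [CommRing A] [IsLocalRing A] (e : ℕ) : Prop :=
  ∃ c : ℤ, ∃ N : ℕ, ∀ n ≥ N,
    (flen A (A ⧸ maximalIdeal A ^ (n + 1)) : ℤ) = (e : ℤ) * (n + 1) - c

/-- `R` is an almost Gorenstein local ring (for the fixed canonical setting): there is an
exact sequence `0 → R → K_R → C → 0` with `mC = 0`; equivalently `m·K ⊆ R`. -/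
def IsAGLSetting (R : Type*) [CommRing R] [IsLocalRing R] (I : Ideal R) (a : R) : Prop :=
  maximalIdeal R • Kfrac R I a ≤ 1

/-- A one-dimensional Cohen-Macaulay local ring is almost Gorenstein. -/
def IsAGLRing (A : Type*) [CommRing A] [IsLocalRing A] : Prop :=
  ∃ (I : Ideal A) (a : A), CanSetting A I a ∧ maximalIdeal A • Kfrac A I a ≤ 1

/-- A one-dimensional local ring is Gorenstein: a fractional canonical ideal equals `R`. -/
def IsGorLoc (A : Type*) [CommRing A] [IsLocalRing A] : Prop :=
  ∃ (I : Ideal A) (a : A), CanSetting A I a ∧ Kfrac A I a = 1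

/-- A one-dimensional ring is Gorenstein: all localizations at maximal ideals are. -/
def IsGorRing (A : Type*) [CommRing A] : Prop :=
  ∀ P : Ideal A, ∀ hP : P.IsMaximal, by
    haveI := hP.isPrime
    exact IsGorLoc (Localization.AtPrime P)

/-- `R` is a `2`-almost Gorenstein local ring: `K² = K³` and `ℓ_R(K²/K) = 2`. -/
def IsTwoAGLK (R : Type*) [CommRing R] (I : Ideal R) (a : R) : Prop :=
  Kfrac R I a ^ 2 = Kfrac R I a ^ 3 ∧ colen (Kfrac R I a ^ 2) (Kfrac R I a) = 2

/-- A ring is a `2`-almost Gorenstein local ring: the Sally module of a canonical ideal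
with respect to a principal reduction has rank `2`. -/
def IsTwoAGLRing (A : Type*) [CommRing A] : Prop :=
  ∃ (I : Ideal A) (a : A), CanSetting A I a ∧ SallyRankIs A I a 2

end

/-! Write `K = I/a`. Multiplying by the unit `(1/a)^{n+1}` turns `I^{n+1} = c Iⁿ` into
`K^{n+1} = (c/a) Kⁿ`; for `c = a` this says `K^{n+1} = Kⁿ`. As `1 ∈ K`, the powers of `K`
increase and become stationary from `m = r_Q(I)` on, so `S = R[K] = K^m`. The rest is arithmetic
in the commutative monoid of `R`-submodules of `Q(R)`: `(b)` is a reduction iff `(b/a) S = S`,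
i.e. iff `b/a` is a unit of `S`. Then `I/b = (a/b) K` has the same stationary power, so
`R[I/b] = S`, and both `I^{n+1} = a Iⁿ` and `I^{n+1} = b Iⁿ` say that `Kⁿ = S`. -/

open Submodule IsLocalization

section CommMonoid

variable {M : Type*} [CommMonoid M] {x y c : M} {m n N : ℕ}

theorem pow_eq_pow_of_pow_succ_eq (h : x ^ (m + 1) = x ^ m) (hn : m ≤ n) : x ^ n = x ^ m := by
  induction n, hn using Nat.le_induction with
  | base => rfl
  | succ n _ ih => rw [pow_succ, ih, ← pow_succ, h]

theorem pow_add_eq_pow_mul_pow_of_pow_succ_eq (h : x ^ (n + 1) = c * x ^ n) (j : ℕ) :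
    x ^ (n + j) = c ^ j * x ^ n := by
  induction j with
  | zero => rw [add_zero, pow_zero, one_mul]
  | succ j ih =>
    rw [← add_assoc, pow_succ, ih, mul_assoc, ← pow_succ, h, ← mul_assoc, ← pow_succ]

theorem exists_pow_succ_eq_mul_pow_iff (h : x ^ (m + 1) = x ^ m) :
    (∃ n, x ^ (n + 1) = c * x ^ n) ↔ c * x ^ m = x ^ m := by
  refine ⟨fun ⟨n, hn⟩ => ?_, fun hc => ⟨m, h.trans hc.symm⟩⟩
  have hpow := pow_add_eq_pow_mul_pow_of_pow_succ_eq hn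
  calc c * x ^ m = c * x ^ (n + m) := by
        rw [pow_eq_pow_of_pow_succ_eq h (by omega : m ≤ n + m)]
    _ = x ^ (n + (m + 1)) := by rw [hpow, hpow, pow_succ', mul_assoc]
    _ = x ^ m := pow_eq_pow_of_pow_succ_eq h (by omega)

theorem pow_mul_eq_self_of_mul_eq_self (h : x ^ (m + 1) = x ^ m) (hc : c * x ^ m = x ^ m)
    (j : ℕ) : c ^ j * x ^ m = x ^ m := by
  rw [← pow_add_eq_pow_mul_pow_of_pow_succ_eq (h.trans hc.symm),
    pow_eq_pow_of_pow_succ_eq h (by omega)]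

theorem pow_succ_eq_mul_pow_iff (h : x ^ (m + 1) = x ^ m) (hc : IsUnit c)
    (hcx : c * x ^ m = x ^ m) : x ^ (n + 1) = c * x ^ n ↔ x ^ n = x ^ m := by
  constructor
  · intro hn
    apply (hc.pow m).mul_left_cancel
    rw [← pow_add_eq_pow_mul_pow_of_pow_succ_eq hn, pow_eq_pow_of_pow_succ_eq h (by omega),
      pow_mul_eq_self_of_mul_eq_self h hcx]
  · intro hn
    rw [pow_succ, hn, ← pow_succ, h, hcx]

theorem pow_eq_pow_of_mul_eq (hx : x ^ (m + 1) = x ^ m) (hy : y ^ (N + 1) = y ^ N)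
    (hc : IsUnit c) (hcx : c * x ^ m = x ^ m) (hcy : c * y = x) : y ^ N = x ^ m := by
  apply (hc.pow (m + N)).mul_left_cancel
  rw [pow_mul_eq_self_of_mul_eq_self hx hcx,
    ← pow_eq_pow_of_pow_succ_eq hy (by omega : N ≤ m + N), ← mul_pow, hcy,
    pow_eq_pow_of_pow_succ_eq hx (by omega)]

end CommMonoid

section Submodule

variable {R A : Type*} [CommSemiring R] [CommSemiring A] [Algebra R A]

theorem toSubmodule_adjoin_eq_pow {K : Submodule R A} {m : ℕ} (h1 : (1 : A) ∈ K)
    (hm : K ^ (m + 1) = K ^ m) :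
    Subalgebra.toSubmodule (Algebra.adjoin R (K : Set A)) = K ^ m := by
  have hmono : Monotone (K ^ ·) := fun _ _ => pow_le_pow_right₀ (one_le.mpr h1)
  apply le_antisymm
  · let T : Subalgebra R A := (K ^ m).toSubalgebra (one_le.mp (hmono m.zero_le))
      fun _ _ hx hy => by
        rw [← pow_eq_pow_of_pow_succ_eq hm (m.le_add_right m), pow_add]
        exact mul_mem_mul hx hy
    have hKT : K ≤ K ^ m :=
      calc K = K ^ 1 := (pow_one K).symm
        _ ≤ K ^ (m + 1) := hmono (by omega : 1 ≤ m + 1)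
        _ = K ^ m := hm
    exact Algebra.adjoin_le (S := T) hKT
  · set S := Subalgebra.toSubmodule (Algebra.adjoin R (K : Set A))
    have hKS : K ≤ S := fun _ hx => Algebra.subset_adjoin hx
    calc K ^ m ≤ S ^ m := pow_le_pow_left₀ bot_le hKS m
      _ ≤ S ^ (m + 1) := pow_le_pow_right₀ (one_le.mpr (Algebra.adjoin R _).one_mem) m.le_succ
      _ = S := (Subalgebra.isIdempotentElem_toSubmodule _).pow_succ_eq m

theorem span_singleton_mul_toSubmodule_eq_self_iff {S : Subalgebra R A} {z : A} :
    span R {z} * Subalgebra.toSubmodule S = Subalgebra.toSubmodule S ↔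
      z ∈ S ∧ ∃ w ∈ S, z * w = 1 := by
  set T := Subalgebra.toSubmodule S
  refine ⟨fun h => ⟨?_, ?_⟩, fun ⟨hz, w, hw, hzw⟩ => le_antisymm ?_ ?_⟩
  · have hz : z * 1 ∈ span R {z} * T := mul_mem_mul (mem_span_singleton_self z) S.one_mem
    rwa [mul_one, h] at hz
  · have h1 : (1 : A) ∈ span R {z} * T := by
      rw [h]
      exact S.one_mem
    exact mem_span_singleton_mul.mp h1
  · calc span R {z} * T ≤ T * T :=
          mul_le_mul_left (span_singleton_le_iff_mem z T |>.mpr hz) T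
      _ = T := S.isIdempotentElem_toSubmodule
  · intro y hy
    refine mem_span_singleton_mul.mpr ⟨w * y, S.mul_mem hw hy, ?_⟩
    rw [← mul_assoc, hzw, one_mul]

end Submodule

theorem mem_nonZeroDivisors_of_reduction {R : Type*} [CommRing R] {I : Ideal R} {a c : R}
    (ha : a ∈ nonZeroDivisors R) (haI : a ∈ I) {n : ℕ}
    (hc : I ^ (n + 1) = Ideal.span {c} * I ^ n) : c ∈ nonZeroDivisors R := by
  have hpow : a ^ (n + 1) ∈ Ideal.span {c} * I ^ n := by
    rw [← hc]
    exact Ideal.pow_mem_pow haI (n + 1)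
  obtain ⟨r, hr⟩ := Ideal.mem_span_singleton'.mp (Ideal.mul_le_left hpow)
  have hrc : r * c ∈ nonZeroDivisors R := by
    rw [hr]
    exact pow_mem ha (n + 1)
  exact (mul_mem_nonZeroDivisors.mp hrc).2

section FractionRing

variable {R : Type*} [CommRing R]

theorem one_mem_Kfrac {I : Ideal R} {a : R} (ha : a ∈ I) : (1 : FractionRing R) ∈ Kfrac R I a :=
  subset_span ⟨a, ha, one_mul _⟩

theorem Kfrac_eq_span_mul_coeSubmodule (I : Ideal R) (a : nonZeroDivisors R) :
    Kfrac R I a = span R {mk' (FractionRing R) 1 a} * coeSubmodule (FractionRing R) I := by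
  conv_rhs => rw [← Ideal.span_eq I, coeSubmodule_span, span_mul_span, Set.singleton_mul,
    Set.image_image]
  rw [Kfrac]
  congr 1
  ext z
  refine exists_congr fun x => and_congr_right fun _ => ?_
  rw [← eq_mk'_iff_mul_eq, mk'_eq_mul_mk'_one, mul_comm, eq_comm]

theorem coeSubmodule_pow {S : Type*} [CommRing S] [Algebra R S] (I : Ideal R) (n : ℕ) :
    coeSubmodule S (I ^ n) = coeSubmodule S I ^ n :=
  Submodule.map_pow I (Algebra.ofId R S) n

theorem isUnit_span_mk' (x y : nonZeroDivisors R) :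
    IsUnit (span R {mk' (FractionRing R) (x : R) y}) :=
  (IsUnit.of_mul_eq_one _ (mk'_mul_mk'_eq_one x y)).map (spanSingleton R)

theorem pow_succ_eq_span_mul_pow_iff_Kfrac (I : Ideal R) (a : nonZeroDivisors R) (c : R)
    (n : ℕ) : I ^ (n + 1) = Ideal.span {c} * I ^ n ↔
      Kfrac R I a ^ (n + 1) = span R {mk' (FractionRing R) c a} * Kfrac R I a ^ n := by
  set U := span R {mk' (FractionRing R) (1 : R) a} with hU_def
  set J := coeSubmodule (FractionRing R) I with hJ_def
  have hU : IsUnit (U ^ (n + 1)) := (isUnit_span_mk' 1 a).pow _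
  set C := span R {algebraMap R (FractionRing R) c} with hC_def
  calc I ^ (n + 1) = Ideal.span {c} * I ^ n ↔ J ^ (n + 1) = C * J ^ n := by
        rw [hC_def, ← coeSubmodule_pow, ← coeSubmodule_pow, ← coeSubmodule_span_singleton,
          ← coeSubmodule_mul, (IsFractionRing.coeSubmodule_injective R _).eq_iff]
    _ ↔ U ^ (n + 1) * J ^ (n + 1) = U ^ (n + 1) * (C * J ^ n) := hU.mul_right_inj.symm
    _ ↔ _ := by
      rw [Kfrac_eq_span_mul_coeSubmodule, mk'_eq_mul_mk'_one c a, ← Set.singleton_mul_singleton,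
        ← span_mul_span, ← hJ_def, ← hU_def, ← hC_def]
      ring_nf

theorem Kfrac_pow_succ_eq_iff (I : Ideal R) (a : nonZeroDivisors R) (n : ℕ) :
    I ^ (n + 1) = Ideal.span {(a : R)} * I ^ n ↔ Kfrac R I a ^ (n + 1) = Kfrac R I a ^ n := by
  rw [pow_succ_eq_span_mul_pow_iff_Kfrac I a a n, mk'_self', ← one_eq_span, one_mul]

theorem Kfrac_eq_span_mul_Kfrac (I : Ideal R) (a b : nonZeroDivisors R) :
    Kfrac R I a = span R {mk' (FractionRing R) (b : R) a} * Kfrac R I b := by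
  rw [Kfrac_eq_span_mul_coeSubmodule, Kfrac_eq_span_mul_coeSubmodule, ← mul_assoc, span_mul_span,
    Set.singleton_mul_singleton, mk'_eq_mul_mk'_one (b : R) a, mul_right_comm, mk'_spec',
    map_one, one_mul]

end FractionRing

section Reduction

variable {R : Type*} [CommRing R] {I : Ideal R} {a b : nonZeroDivisors R} {m : ℕ}

theorem toSubmodule_Sring_eq_Kfrac_pow (haI : (a : R) ∈ I)
    (hm : I ^ (m + 1) = Ideal.span {(a : R)} * I ^ m) :
    Subalgebra.toSubmodule (Sring R I a) = Kfrac R I a ^ m :=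
  toSubmodule_adjoin_eq_pow (one_mem_Kfrac haI) ((Kfrac_pow_succ_eq_iff I a m).mp hm)

theorem reduction_iff_span_mk'_mul_Kfrac_pow_eq
    (hm : I ^ (m + 1) = Ideal.span {(a : R)} * I ^ m) (c : R) :
    (∃ n, I ^ (n + 1) = Ideal.span {c} * I ^ n) ↔
      span R {mk' (FractionRing R) c a} * Kfrac R I a ^ m = Kfrac R I a ^ m := by
  simp_rw [pow_succ_eq_span_mul_pow_iff_Kfrac I a c]
  exact exists_pow_succ_eq_mul_pow_iff ((Kfrac_pow_succ_eq_iff I a m).mp hm)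

theorem Sring_eq_of_reduction (haI : (a : R) ∈ I)
    (hm : I ^ (m + 1) = Ideal.span {(a : R)} * I ^ m)
    (hbI : (b : R) ∈ I) {n : ℕ} (hn : I ^ (n + 1) = Ideal.span {(b : R)} * I ^ n) :
    Sring R I b = Sring R I a := by
  have hcx := (reduction_iff_span_mk'_mul_Kfrac_pow_eq hm b).mp ⟨n, hn⟩
  apply Subalgebra.toSubmodule_injective
  rw [toSubmodule_Sring_eq_Kfrac_pow hbI hn, toSubmodule_Sring_eq_Kfrac_pow haI hm]
  exact pow_eq_pow_of_mul_eq ((Kfrac_pow_succ_eq_iff I a m).mp hm)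
    ((Kfrac_pow_succ_eq_iff I b n).mp hn) (isUnit_span_mk' b a) hcx
    (Kfrac_eq_span_mul_Kfrac I a b).symm

theorem pow_succ_eq_span_mul_pow_iff_of_reduction
    (hm : I ^ (m + 1) = Ideal.span {(a : R)} * I ^ m)
    (hb : ∃ n, I ^ (n + 1) = Ideal.span {(b : R)} * I ^ n) (n : ℕ) :
    I ^ (n + 1) = Ideal.span {(a : R)} * I ^ n ↔ I ^ (n + 1) = Ideal.span {(b : R)} * I ^ n := by
  have hK := (Kfrac_pow_succ_eq_iff I a m).mp hm
  have hcx := (reduction_iff_span_mk'_mul_Kfrac_pow_eq hm b).mp hb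
  rw [Kfrac_pow_succ_eq_iff, pow_succ_eq_span_mul_pow_iff_Kfrac I a b,
    pow_succ_eq_mul_pow_iff hK (isUnit_span_mk' b a) hcx]
  simpa using pow_succ_eq_mul_pow_iff hK isUnit_one (one_mul _) (n := n)

end Reduction

theorem reduction_iff_unit_in_S_general (R : Type*) [CommRing R]
    (I : Ideal R) (a : R) (hset : CanSetting R I a) (b : R) (hb : b ∈ I) :
    ((∃ n : ℕ, I ^ (n + 1) = Ideal.span {b} * I ^ n) ↔
      (∃ z : FractionRing R,
        z * algebraMap R (FractionRing R) a = algebraMap R (FractionRing R) b ∧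
        z ∈ Sring R I a ∧ ∃ w ∈ Sring R I a, z * w = 1)) ∧
    ((∃ n : ℕ, I ^ (n + 1) = Ideal.span {b} * I ^ n) →
      Sring R I a = Sring R I b ∧
      sInf {n : ℕ | I ^ (n + 1) = Ideal.span {a} * I ^ n} =
        sInf {n : ℕ | I ^ (n + 1) = Ideal.span {b} * I ^ n}) := by
  obtain ⟨a, rfl⟩ : ∃ a' : nonZeroDivisors R, (a' : R) = a := ⟨⟨a, hset.nzd⟩, rfl⟩
  obtain ⟨m, hm⟩ := hset.red
  have hkey := reduction_iff_span_mk'_mul_Kfrac_pow_eq hm b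
  rw [← toSubmodule_Sring_eq_Kfrac_pow hset.mem hm,
    span_singleton_mul_toSubmodule_eq_self_iff] at hkey
  refine ⟨hkey.trans ⟨fun h => ⟨_, mk'_spec _ b a, h⟩, ?_⟩, fun ⟨n, hn⟩ => ?_⟩
  · rintro ⟨z, hz, h⟩
    rwa [← eq_mk'_iff_mul_eq.mpr hz]
  obtain ⟨b, rfl⟩ : ∃ b' : nonZeroDivisors R, (b' : R) = b :=
    ⟨⟨b, mem_nonZeroDivisors_of_reduction hset.nzd hset.mem hn⟩, rfl⟩
  exact ⟨(Sring_eq_of_reduction hset.mem hm hb hn).symm,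
    congrArg sInf (Set.ext (pow_succ_eq_span_mul_pow_iff_of_reduction hm ⟨n, hn⟩))⟩

/-- **Lemma 2.2 (2).** For `b ∈ I`, `(b)` is a reduction of `I` iff `b/a` is an invertible
element of `S`; in that case `S = R[I/b]` and `r_Q(I) = r_{(b)}(I)`. -/
theorem reduction_iff_unit_in_S (R : Type*) [CommRing R] [IsLocalRing R] [IsNoetherianRing R]
    (hdim : ringKrullDim R = 1)
    (hCM : ∃ x ∈ maximalIdeal R, x ∈ nonZeroDivisors R)
    (I : Ideal R) (a : R) (hset : CanSetting R I a) (b : R) (hb : b ∈ I) :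
    ((∃ n : ℕ, I ^ (n + 1) = Ideal.span {b} * I ^ n) ↔
      (∃ z : FractionRing R,
        z * algebraMap R (FractionRing R) a = algebraMap R (FractionRing R) b ∧
        z ∈ Sring R I a ∧ ∃ w ∈ Sring R I a, z * w = 1)) ∧
    ((∃ n : ℕ, I ^ (n + 1) = Ideal.span {b} * I ^ n) →
      Sring R I a = Sring R I b ∧
      sInf {n : ℕ | I ^ (n + 1) = Ideal.span {a} * I ^ n} =
        sInf {n : ℕ | I ^ (n + 1) = Ideal.span {b} * I ^ n}) :=
  reduction_iff_unit_in_S_general R I a hset b hb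
end

section
/- 𝔠 = R : K if and only if S = K². -/
open IsLocalRing Polynomial

set_option maxHeartbeats 1000000
set_option synthInstance.maxHeartbeats 400000

/-! Since `K : K = R` and `R ⊆ K ⊆ S` with `S` a ring, the conductor `R : S` equals `K : S`,
while `R : K = (K : K) : K = K : K²`. Hence `𝔠 = R : K` says `K : S = K : K²`, and duality
`J = K : (K : J)` makes `J ↦ K : J` injective on finitely generated fractional ideals
containing `1`. Both `S` and `K²` are such: the reduction `I^{n+1} = a I^n` gives
`K^{n+1} = K^n`, hence `S = K^n`. -/

namespace Submodule

variable {R A : Type*} [CommSemiring R]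

theorem div_div [CommSemiring A] [Algebra R A] (M N P : Submodule R A) :
    M / N / P = M / (N * P) :=
  eq_of_forall_le_iff fun X => by
    simp only [le_div_iff_mul_le, mul_assoc, Submodule.mul_comm P N]

theorem div_one [CommSemiring A] [Algebra R A] (M : Submodule R A) : M / 1 = M :=
  eq_of_forall_le_iff fun X => by rw [le_div_iff_mul_le, mul_one]

theorem one_div_eq_div_of_one_le [CommSemiring A] [Algebra R A] {M : Submodule R A}
    (hM : 1 ≤ M) (hMM : M / M ≤ 1) {S : Subalgebra R A} (hMS : M ≤ Subalgebra.toSubmodule S) :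
    1 / Subalgebra.toSubmodule S = M / Subalgebra.toSubmodule S := by
  refine le_antisymm (fun x hx y hy => hM (hx y hy)) fun x hx y hy => hMM fun z hz => ?_
  rw [mul_assoc]
  exact hx _ (S.mul_mem hy (hMS hz))

theorem pow_le_toSubmodule_adjoin [Semiring A] [Algebra R A] (M : Submodule R A) :
    ∀ n : ℕ, M ^ n ≤ Subalgebra.toSubmodule (Algebra.adjoin R (M : Set A))
  | 0 => one_le.mpr (Subalgebra.one_mem _)
  | n + 1 => mul_le.mpr fun _ hx _ hy =>
      Subalgebra.mul_mem _ (pow_le_toSubmodule_adjoin M n hx) (Algebra.subset_adjoin hy)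

theorem toSubmodule_adjoin_eq_pow [Semiring A] [Algebra R A] {M : Submodule R A}
    (hM : 1 ≤ M) {n : ℕ} (hn : M ^ (n + 1) = M ^ n) :
    Subalgebra.toSubmodule (Algebra.adjoin R (M : Set A)) = M ^ n := by
  have hstable : ∀ k, M ^ (n + k) = M ^ n := by
    intro k
    induction k with
    | zero => rfl
    | succ k ih => rw [← add_assoc, pow_succ, ih, ← pow_succ, hn]
  let T := (M ^ n).toSubalgebra (one_le.mp (one_le_pow_of_one_le' hM n)) fun x y hx hy => by
    rw [← hstable n, pow_add]; exact mul_mem_mul hx hy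
  have hMT : M ≤ M ^ n := by
    rw [← hn]; exact (pow_one M).symm.trans_le (pow_le_pow_right' hM (Nat.le_add_left 1 n))
  exact le_antisymm (Algebra.adjoin_le (S := T) hMT) (pow_le_toSubmodule_adjoin M n)

end Submodule

namespace IsCanonicalSub

variable {R : Type*} [CommRing R] {K : Submodule R (FractionRing R)}

theorem div_self (hK : IsCanonicalSub R K) : K / K = 1 := by
  have hfg : (1 : Submodule R (FractionRing R)).FG := by
    rw [Submodule.one_eq_span]; exact Submodule.fg_span_singleton 1
  simpa only [Submodule.div_one] using hK 1 hfg ⟨1, Submodule.one_le.mp le_rfl, isUnit_one⟩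

theorem eq_of_div_eq (hK : IsCanonicalSub R K) {J J' : Submodule R (FractionRing R)}
    (hJ : J.FG) (hJ1 : 1 ≤ J) (hJ' : J'.FG) (hJ'1 : 1 ≤ J') (h : K / J = K / J') : J = J' := by
  rw [← hK J hJ ⟨1, Submodule.one_le.mp hJ1, isUnit_one⟩,
    ← hK J' hJ' ⟨1, Submodule.one_le.mp hJ'1, isUnit_one⟩, h]

end IsCanonicalSub

section Kfrac

variable {R : Type*} [CommRing R] {I : Ideal R} {a : R}

open Pointwise in
theorem Kfrac_eq_span_mul_map (ha : a ∈ nonZeroDivisors R) :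
    Kfrac R I a = Submodule.span R {IsLocalization.mk' (FractionRing R) (1 : R) ⟨a, ha⟩}
      * Submodule.map (Algebra.ofId R (FractionRing R)).toLinearMap I := by
  set v := IsLocalization.mk' (FractionRing R) (1 : R) ⟨a, ha⟩
  have hva : v * algebraMap R (FractionRing R) a = 1 :=
    (IsLocalization.mk'_spec_mk _ _ _ ha).trans (map_one _)
  rw [Submodule.span_singleton_mul, Kfrac, ← Submodule.span_eq (v • _)]
  congr 1
  ext z
  simp only [Set.mem_ofPred_eq, SetLike.mem_coe, Submodule.mem_smul_pointwise_iff_exists,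
    Submodule.mem_map, AlgHom.toLinearMap_apply, Algebra.ofId_apply, smul_eq_mul]
  constructor
  · rintro ⟨x, hx, hzx⟩
    exact ⟨_, ⟨x, hx, rfl⟩, by rw [← hzx, mul_comm, mul_assoc, mul_comm _ v, hva, mul_one]⟩
  · rintro ⟨_, ⟨x, hx, rfl⟩, rfl⟩
    exact ⟨x, hx, by rw [mul_right_comm, hva, one_mul]⟩

theorem one_le_Kfrac (haI : a ∈ I) : 1 ≤ Kfrac R I a :=
  Submodule.one_le.mpr (Submodule.subset_span ⟨a, haI, one_mul _⟩)

theorem fg_Kfrac [IsNoetherianRing R] (ha : a ∈ nonZeroDivisors R) : (Kfrac R I a).FG := by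
  rw [Kfrac_eq_span_mul_map ha]
  exact (Submodule.fg_span_singleton _).mul ((IsNoetherian.noetherian I).map _)

theorem Kfrac_pow_succ_eq_pow (ha : a ∈ nonZeroDivisors R) {n : ℕ}
    (hred : I ^ (n + 1) = Ideal.span {a} * I ^ n) :
    Kfrac R I a ^ (n + 1) = Kfrac R I a ^ n := by
  rw [Kfrac_eq_span_mul_map ha]
  set v := IsLocalization.mk' (FractionRing R) (1 : R) ⟨a, ha⟩
  set f := (Algebra.ofId R (FractionRing R)).toLinearMap
  have hva : Submodule.span R {v} * Submodule.map f (Ideal.span {a}) = 1 := by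
    rw [Ideal.span, Submodule.map_span, Set.image_singleton, Submodule.span_mul_span,
      Set.singleton_mul_singleton, AlgHom.toLinearMap_apply, Algebra.ofId_apply,
      (IsLocalization.mk'_spec_mk _ _ _ ha).trans (map_one _), Submodule.one_eq_span]
  rw [mul_pow, mul_pow, ← Submodule.map_pow, ← Submodule.map_pow, hred, Submodule.map_mul,
    pow_succ, mul_assoc, ← mul_assoc (Submodule.span R {v}), hva, one_mul]

end Kfrac

theorem conductor_eq_colon_iff_general (R : Type*) [CommRing R] [IsNoetherianRing R]
    (I : Ideal R) (a : R) (hset : CanSetting R I a) :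
    condS R I a = (1 : Submodule R (FractionRing R)) / Kfrac R I a ↔
      Smod R I a = Kfrac R I a ^ 2 := by
  obtain ⟨n, hred⟩ := hset.red
  set K := Kfrac R I a
  have hK1 : 1 ≤ K := one_le_Kfrac hset.mem
  have hKK : K / K = 1 := hset.canonical.div_self
  have hS : Smod R I a = K ^ n :=
    Submodule.toSubmodule_adjoin_eq_pow hK1 (Kfrac_pow_succ_eq_pow hset.nzd hred)
  have hcond : condS R I a = K / Smod R I a :=
    Submodule.one_div_eq_div_of_one_le hK1 hKK.le fun _ hx => Algebra.subset_adjoin hx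
  have hinv : 1 / K = K / K ^ 2 := by
    rw [pow_two, ← Submodule.div_div, hKK]
  constructor
  · intro h
    refine hset.canonical.eq_of_div_eq ?_ ?_ ((fg_Kfrac hset.nzd).pow 2)
      (one_le_pow_of_one_le' hK1 2) (by rw [← hcond, h, hinv])
    · rw [hS]; exact (fg_Kfrac hset.nzd).pow n
    · rw [hS]; exact one_le_pow_of_one_le' hK1 n
  · intro h
    rw [hcond, h, hinv]

/-- **Proposition 2.4 (2).** `𝔠 = R : K` if and only if `S = K²`. -/
theorem conductor_eq_colon_iff (R : Type*) [CommRing R] [IsLocalRing R] [IsNoetherianRing R]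
    (hdim : ringKrullDim R = 1)
    (hCM : ∃ x ∈ maximalIdeal R, x ∈ nonZeroDivisors R)
    (I : Ideal R) (a : R) (hset : CanSetting R I a) :
    condS R I a = (1 : Submodule R (FractionRing R)) / Kfrac R I a ↔
      Smod R I a = Kfrac R I a ^ 2 :=
  conductor_eq_colon_iff_general R I a hset
end
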